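/- For every n ≥ 1, η ∈ [0,1], and all r, t ∈ {0,1}^n with r ≠ t, the total variation distance between the noisy parity distributions D_r^η and D_t^η equals (1−2η)/2 when η ≤ 1/2 (and |1−2η|/2 in general). -/

import Mathlib

def chi {n : ℕ} (s x : Fin n → ZMod 2) : ZMod 2 := ∑ i, s i * x i

def par {n : ℕ} (x : Fin n → ZMod 2) : ZMod 2 := ∑ i, x i

noncomputable def Dnoisy {n : ℕ} (η : ℝ) (s : Fin n → ZMod 2) (x : Fin n → ZMod 2) (y : ZMod 2) : ℝ :=
  if chi s x = y then (1 - η) * ((2 : ℝ) ^ n)⁻¹ else η * ((2 : ℝ) ^ n)⁻¹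

lemma chi_add_left {n : ℕ} (r t x : Fin n → ZMod 2) :
    chi (r + t) x = chi r x + chi t x := by
  simp [chi, add_mul, Finset.sum_add_distrib]

lemma chi_add_right {n : ℕ} (s x z : Fin n → ZMod 2) :
    chi s (x + z) = chi s x + chi s z := by
  simp [chi, mul_add, Finset.sum_add_distrib]

lemma chi_single {n : ℕ} (s : Fin n → ZMod 2) (i : Fin n) :
    chi s (fun j => if j = i then 1 else 0) = s i := by
  simp [chi]

lemma card_chi_one (n : ℕ) (s : Fin n → ZMod 2) (hs : s ≠ 0) :
    (Finset.univ.filter (fun x : Fin n → ZMod 2 => chi s x = 1)).card = 2 ^ (n - 1) := by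
  obtain ⟨i, hi⟩ := Function.ne_iff.mp hs
  have hone : ∀ a : ZMod 2, a ≠ 0 → a = 1 := by decide
  have hsi : s i = 1 := hone _ hi
  set e : Fin n → ZMod 2 := fun j => if j = i then 1 else 0 with he
  have hkey : ∀ x, chi s (x + e) = chi s x + 1 := by
    intro x
    rw [chi_add_right, he, chi_single, hsi]
  have hee : e + e = 0 := by
    funext j
    simp only [he, Pi.add_apply, Pi.zero_apply]
    split <;> decide
  have hbij : (Finset.univ.filter (fun x : Fin n → ZMod 2 => chi s x = 0)).card
      = (Finset.univ.filter (fun x : Fin n → ZMod 2 => chi s x = 1)).card := by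
    apply Finset.card_nbij' (fun x => x + e) (fun x => x + e)
    · intro x hx
      simp only [Finset.mem_coe, Finset.mem_filter, Finset.mem_univ, true_and] at hx ⊢
      rw [hkey, hx]; decide
    · intro x hx
      simp only [Finset.mem_coe, Finset.mem_filter, Finset.mem_univ, true_and] at hx ⊢
      rw [hkey, hx]; decide
    · intro x hx; simp [add_assoc, hee]
    · intro x hx; simp [add_assoc, hee]
  have htot : (Finset.univ.filter (fun x : Fin n → ZMod 2 => chi s x = 0)).card
      + (Finset.univ.filter (fun x : Fin n → ZMod 2 => chi s x = 1)).card
      = 2 ^ n := by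
    have h01 : ∀ a : ZMod 2, ¬ a = 0 ↔ a = 1 := by decide
    rw [Finset.filter_congr (fun x _ => (h01 (chi s x)).symm)]
    rw [Finset.card_filter_add_card_filter_not]
    simp [Finset.card_univ]
  have hn1 : s ≠ 0 → 1 ≤ n := by
    intro _; by_contra h
    push_neg at h
    interval_cases n
    · exact hs (funext fun j => absurd j.2 (by omega))
  have hn : 1 ≤ n := hn1 hs
  have hp : 2 ^ (n-1) * 2 = 2 ^ n := by
    rw [← pow_succ]; congr 1; omega
  omega

/-- For `r ≠ t`, the total variation distance between the noisy parity distributions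
`D_r^η` and `D_t^η` equals `|1-2η|/2`; in particular it equals `(1-2η)/2` when
`η ≤ 1/2`. -/
theorem tv_Dnoisy (n : ℕ) (hn : 1 ≤ n) (η : ℝ) (hη : η ∈ Set.Icc (0 : ℝ) 1)
    (r t : Fin n → ZMod 2) (hrt : r ≠ t) :
    (η ≤ 1 / 2 →
      (1 / 2 : ℝ) * (∑ x : Fin n → ZMod 2, ∑ y : ZMod 2,
        |Dnoisy η r x y - Dnoisy η t x y|) = (1 - 2 * η) / 2) ∧
    (1 / 2 : ℝ) * (∑ x : Fin n → ZMod 2, ∑ y : ZMod 2,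
        |Dnoisy η r x y - Dnoisy η t x y|) = |1 - 2 * η| / 2 := by
  have hc : (0 : ℝ) < ((2 : ℝ) ^ n)⁻¹ := by positivity
  have hA : ∀ x y, |Dnoisy η r x y - Dnoisy η t x y| =
      if chi r x = chi t x then 0 else |1 - 2 * η| * ((2:ℝ)^n)⁻¹ := by
    intro x y
    by_cases h : chi r x = chi t x
    · simp [Dnoisy, h]
    · simp only [h, if_false]
      by_cases hy : chi r x = y
      · have hty : ¬ chi t x = y := fun e => h (hy.trans e.symm)
        simp only [Dnoisy, hy, hty, if_true, if_false]
        rw [← sub_mul, abs_mul, abs_of_pos hc]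
        ring_nf
      · have hty : chi t x = y := by
          have : ∀ a b c : ZMod 2, ¬ a = b → ¬ a = c → b = c := by decide
          exact this _ _ _ h hy
        simp only [Dnoisy, hy, hty, if_true, if_false]
        rw [← sub_mul, abs_mul, abs_of_pos hc, show η - (1 - η) = -(1 - 2*η) by ring, abs_neg]
  have hsum : (∑ x : Fin n → ZMod 2, ∑ y : ZMod 2,
      |Dnoisy η r x y - Dnoisy η t x y|) = |1 - 2 * η| := by
    have hx : ∀ x : Fin n → ZMod 2, (∑ y : ZMod 2, |Dnoisy η r x y - Dnoisy η t x y|)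
        = if chi r x = chi t x then 0 else 2 * (|1 - 2 * η| * ((2:ℝ)^n)⁻¹) := by
      intro x
      rw [Finset.sum_congr rfl (fun y _ => hA x y)]
      by_cases h : chi r x = chi t x <;> simp [h, Finset.sum_const, Finset.card_univ] <;> ring
    rw [Finset.sum_congr rfl (fun x _ => hx x)]
    rw [Finset.sum_ite, Finset.sum_const_zero, Finset.sum_const, zero_add, nsmul_eq_mul]
    have hfilt : (Finset.univ.filter (fun x : Fin n → ZMod 2 => ¬ chi r x = chi t x)).card
        = 2 ^ (n - 1) := by
      have hcong : ∀ x : Fin n → ZMod 2, (¬ chi r x = chi t x) ↔ chi (r + t) x = 1 := by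
        intro x
        rw [chi_add_left]
        revert hrt
        generalize chi r x = a
        generalize chi t x = b
        intro _
        revert a b; decide
      rw [Finset.filter_congr (fun x _ => by rw [hcong x])]
      apply card_chi_one
      intro h0
      apply hrt
      funext j
      have := congrFun h0 j
      simp at this
      have h2 : ∀ a b : ZMod 2, a + b = 0 → a = b := by decide
      exact h2 _ _ this
    rw [hfilt]
    push_cast
    have h2n : (2:ℝ) ^ (n-1) * 2 = 2 ^ n := by
      rw [← pow_succ]
      congr 1
      omega
    field_simp
    rw [h2n]
    ring
  constructor
  · intro hle
    rw [hsum, abs_of_nonneg (by linarith)]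
    ring
  · rw [hsum]; ring
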